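/- arXiv:2002.05238 — 13 statements merged into one kernel-verified Lean document; each statement's English description precedes it below -/
import Mathlib

section
/- Let P and Q be equivalence relations on a set U. Then P and Q are coherent if and only if P ∪ Q = P ∘ Q, where P ∘ Q is the relational composition {(a,b) : ∃c, (a,c) ∈ P and (c,b) ∈ Q}. -/
/-- The R-neighbourhood of x: R(x) = {y : x R y}. -/
def nbhd {α : Type*} (R : α → α → Prop) (x : α) : Set α := {y | R x y}

/-- Lower R-approximation: X_R = {x : R(x) ⊆ X}. -/
def lowerApprox {α : Type*} (R : α → α → Prop) (X : Set α) : Set α :=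
  {x | nbhd R x ⊆ X}

/-- Upper R-approximation: X^R = {x : R(x) ∩ X ≠ ∅}. -/
def upperApprox {α : Type*} (R : α → α → Prop) (X : Set α) : Set α :=
  {x | (nbhd R x ∩ X).Nonempty}

/-- Optimistic lower approximation: X_{P+Q} = X_P ∪ X_Q. -/
def optLower {α : Type*} (P Q : α → α → Prop) (X : Set α) : Set α :=
  lowerApprox P X ∪ lowerApprox Q X

/-- Optimistic upper approximation: X^{P+Q} = X^P ∩ X^Q. -/
def optUpper {α : Type*} (P Q : α → α → Prop) (X : Set α) : Set α :=
  upperApprox P X ∩ upperApprox Q X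

/-- Coherence: for every x, P(x) ⊆ Q(x) or Q(x) ⊆ P(x). -/
def Coherent {α : Type*} (P Q : α → α → Prop) : Prop :=
  ∀ x, nbhd P x ⊆ nbhd Q x ∨ nbhd Q x ⊆ nbhd P x

/-- P and Q are coherent iff P ∪ Q = P ∘ Q. -/
theorem stmt_2 {α : Type*} (P Q : α → α → Prop)
    (hP : Equivalence P) (hQ : Equivalence Q) :
    Coherent P Q ↔ ∀ a b, (P a b ∨ Q a b) ↔ (∃ c, P a c ∧ Q c b) := by
  constructor
  · intro hc a b
    constructor
    · rintro (hab | hab)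
      · rcases hc a with h | h
        · exact ⟨a, hP.refl a, h hab⟩
        · exact ⟨b, hab, hQ.refl b⟩
      · exact ⟨a, hP.refl a, hab⟩
    · rintro ⟨c, hac, hcb⟩
      rcases hc c with h | h
      · exact Or.inr (hQ.trans (hQ.symm (h (hP.symm hac))) hcb)
      · exact Or.inl (hP.trans hac (h hcb))
  · intro h x
    by_contra hcon
    push_neg at hcon
    obtain ⟨⟨y, hy, hy'⟩, ⟨z, hz, hz'⟩⟩ :
        (∃ y, y ∈ nbhd P x ∧ y ∉ nbhd Q x) ∧ ∃ z, z ∈ nbhd Q x ∧ z ∉ nbhd P x := by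
      rcases hcon with ⟨h1, h2⟩
      exact ⟨Set.not_subset.mp h1, Set.not_subset.mp h2⟩
    have : P y z ∨ Q y z := (h y z).mpr ⟨x, hP.symm hy, hz⟩
    rcases this with h' | h'
    · exact hz' (hP.trans hy h')
    · exact hy' (hQ.trans hz (hQ.symm h'))
end

section
/- Let P and Q be coherent equivalence relations on a set U. Then for every X ⊆ U, the optimistic upper approximation equals the upper approximation with respect to the intersection: X^{P+Q} = X^{P∩Q}. -/
/-- for coherent P, Q: X^{P+Q} = X^{P∩Q}. -/
theorem stmt_3 {α : Type*} (P Q : α → α → Prop)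
    (hP : Equivalence P) (hQ : Equivalence Q) (h : Coherent P Q) :
    ∀ X : Set α, optUpper P Q X = upperApprox (fun a b => P a b ∧ Q a b) X := by
  intro X
  ext x
  constructor
  · rintro ⟨⟨yp, hyp, hypX⟩, ⟨yq, hyq, hyqX⟩⟩
    rcases h x with hsub | hsub
    · exact ⟨yp, ⟨hyp, hsub hyp⟩, hypX⟩
    · exact ⟨yq, ⟨hsub hyq, hyq⟩, hyqX⟩
  · rintro ⟨y, ⟨hyP, hyQ⟩, hyX⟩
    exact ⟨⟨y, hyP, hyX⟩, ⟨y, hyQ, hyX⟩⟩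
end

section
/- Let P and Q be coherent equivalence relations on a set U. Then for every X ⊆ U, the optimistic lower approximation equals the lower approximation with respect to the intersection: X_{P+Q} = X_{P∩Q}. -/
/-- for coherent P, Q: X_{P+Q} = X_{P∩Q}. -/
theorem stmt_4 {α : Type*} (P Q : α → α → Prop)
    (hP : Equivalence P) (hQ : Equivalence Q) (h : Coherent P Q) :
    ∀ X : Set α, optLower P Q X = lowerApprox (fun a b => P a b ∧ Q a b) X := by
  intro X
  ext x
  constructor
  · rintro (hx | hx) y hy
    · exact hx hy.1
    · exact hx hy.2
  · intro hx
    rcases h x with hc | hc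
    · left
      intro y hy
      exact hx ⟨hy, hc hy⟩
    · right
      intro y hy
      exact hx ⟨hc hy, hy⟩
end

section
/- Let P and Q be equivalence relations on a set U that are not coherent. Then the lattice ℘(U)^{P+Q} is not distributive; concretely, there exist sets A, B, C ⊆ U with A^{P+Q} = A, B^{P+Q} = B, C^{P+Q} = C such that A ∩ ((B ∪ C)^{P+Q}) ≠ (((A ∩ B) ∪ (A ∩ C))^{P+Q}). (Hence if ℘(U)^{P+Q}, ordered by inclusion with meet the intersection and join of X, Y the set (X ∪ Y)^{P+Q}, is a distributive lattice, then P and Q are coherent.) -/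
/-- The intersection of a P-class with a Q-class is closed. -/
lemma class_inter_closed {α : Type*} (P Q : α → α → Prop)
    (hP : Equivalence P) (hQ : Equivalence Q) (a : α) :
    optUpper P Q (nbhd P a ∩ nbhd Q a) = nbhd P a ∩ nbhd Q a := by
  ext w
  constructor
  · rintro ⟨⟨u, huw, huP, _⟩, ⟨v, hvw, _, hvQ⟩⟩
    exact ⟨hP.trans huP (hP.symm huw), hQ.trans hvQ (hQ.symm hvw)⟩
  · rintro ⟨h1, h2⟩
    exact ⟨⟨w, hP.refl w, h1, h2⟩, ⟨w, hQ.refl w, h1, h2⟩⟩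

/-- if P and Q are not coherent, ℘(U)^{P+Q} is not distributive:
there exist closed sets A, B, C witnessing failure of the distributive law. -/
theorem stmt_5 {α : Type*} (P Q : α → α → Prop)
    (hP : Equivalence P) (hQ : Equivalence Q) (h : ¬ Coherent P Q) :
    ∃ A B C : Set α,
      optUpper P Q A = A ∧ optUpper P Q B = B ∧ optUpper P Q C = C ∧
      A ∩ optUpper P Q (B ∪ C) ≠ optUpper P Q ((A ∩ B) ∪ (A ∩ C)) := by
  simp only [Coherent, not_forall] at h
  obtain ⟨x, hx⟩ := h
  push_neg at hx
  obtain ⟨h1, h2⟩ := hx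
  rw [Set.not_subset] at h1 h2
  obtain ⟨y, hPxy, hnQxy⟩ := h1
  obtain ⟨z, hQxz, hnPxz⟩ := h2
  refine ⟨nbhd P x ∩ nbhd Q x, nbhd P y ∩ nbhd Q y, nbhd P z ∩ nbhd Q z,
    class_inter_closed P Q hP hQ x, class_inter_closed P Q hP hQ y,
    class_inter_closed P Q hP hQ z, ?_⟩
  -- A∩B = ∅ (their Q-parts are disjoint), A∩C = ∅ (their P-parts are disjoint)
  have hAB : (nbhd P x ∩ nbhd Q x) ∩ (nbhd P y ∩ nbhd Q y) = ∅ := by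
    ext w
    simp only [Set.mem_inter_iff, Set.mem_empty_iff_false, iff_false, not_and]
    rintro ⟨_, hQxw⟩ _ hQyw
    exact hnQxy (hQ.trans hQxw (hQ.symm hQyw))
  have hAC : (nbhd P x ∩ nbhd Q x) ∩ (nbhd P z ∩ nbhd Q z) = ∅ := by
    ext w
    simp only [Set.mem_inter_iff, Set.mem_empty_iff_false, iff_false, not_and]
    rintro ⟨hPxw, _⟩ hPzw _
    exact absurd (hP.trans hPxw (hP.symm hPzw)) hnPxz
  have hRHS : optUpper P Q (((nbhd P x ∩ nbhd Q x) ∩ (nbhd P y ∩ nbhd Q y)) ∪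
      ((nbhd P x ∩ nbhd Q x) ∩ (nbhd P z ∩ nbhd Q z))) = ∅ := by
    rw [hAB, hAC, Set.empty_union]
    ext w
    simp only [optUpper, upperApprox, Set.mem_inter_iff, Set.mem_setOf_eq,
      Set.inter_empty, Set.not_nonempty_empty, Set.mem_empty_iff_false, iff_false,
      not_and, not_false_iff, implies_true]
  intro heq
  have hxL : x ∈ (nbhd P x ∩ nbhd Q x) ∩
      optUpper P Q ((nbhd P y ∩ nbhd Q y) ∪ (nbhd P z ∩ nbhd Q z)) := by
    refine ⟨⟨hP.refl x, hQ.refl x⟩, ⟨y, hPxy, Or.inl ⟨hP.refl y, hQ.refl y⟩⟩,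
      ⟨z, hQxz, Or.inr ⟨hP.refl z, hQ.refl z⟩⟩⟩
  rw [heq, hRHS] at hxL
  exact hxL
end

section
/- Let P and Q be equivalence relations on a set U and write T = P ∪ Q (a tolerance on U). The map A ↦ (A^c)^T is an orthocomplementation on the complete lattice ℘(U)^T = {A ⊆ U : ((A_T)^T) = A}: for all A, B ∈ ℘(U)^T one has (A^c)^T ∈ ℘(U)^T, (i) A ⊆ B implies (B^c)^T ⊆ (A^c)^T, (ii) ((((A^c)^T)^c)^T = A, and (iii) A ∪ (A^c)^T = U and the meet of A and (A^c)^T in ℘(U)^T is empty, i.e. ((A ∩ (A^c)^T)_T)^T = ∅. -/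
lemma upper_compl' {α : Type*} (T : α → α → Prop) (X : Set α) :
    upperApprox T Xᶜ = (lowerApprox T X)ᶜ := by
  ext x
  simp only [upperApprox, lowerApprox, Set.mem_setOf_eq, Set.mem_compl_iff,
    Set.not_subset, Set.inter_compl_nonempty_iff]

lemma lower_compl' {α : Type*} (T : α → α → Prop) (X : Set α) :
    lowerApprox T Xᶜ = (upperApprox T X)ᶜ := by
  ext x
  simp only [upperApprox, lowerApprox, Set.mem_setOf_eq, Set.mem_compl_iff,
    Set.not_nonempty_iff_eq_empty, ← Set.subset_compl_iff_disjoint_right,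
    ← Set.disjoint_iff_inter_eq_empty, Set.disjoint_right]

lemma upper_mono' {α : Type*} (T : α → α → Prop) {X Y : Set α} (h : X ⊆ Y) :
    upperApprox T X ⊆ upperApprox T Y := fun _ ⟨z, hz1, hz2⟩ => ⟨z, hz1, h hz2⟩

lemma subset_lower_upper' {α : Type*} {T : α → α → Prop}
    (hsym : ∀ a b, T a b → T b a) (X : Set α) :
    X ⊆ lowerApprox T (upperApprox T X) := by
  intro x hx y hy
  exact ⟨x, hsym x y hy, hx⟩

lemma upper_lower_subset' {α : Type*} {T : α → α → Prop}
    (hsym : ∀ a b, T a b → T b a) (Y : Set α) :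
    upperApprox T (lowerApprox T Y) ⊆ Y := by
  rintro x ⟨z, hz1, hz2⟩
  exact hz2 (hsym x z hz1)

/-- on ℘(U)^T with T = P ∪ Q, the map A ↦ (Aᶜ)^T is an
orthocomplementation. -/
theorem stmt_9 {α : Type*} (P Q : α → α → Prop)
    (hP : Equivalence P) (hQ : Equivalence Q) :
    ∀ A B : Set α,
      upperApprox (fun a b => P a b ∨ Q a b) (lowerApprox (fun a b => P a b ∨ Q a b) A) = A →
      upperApprox (fun a b => P a b ∨ Q a b) (lowerApprox (fun a b => P a b ∨ Q a b) B) = B →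
      (upperApprox (fun a b => P a b ∨ Q a b)
          (lowerApprox (fun a b => P a b ∨ Q a b)
            (upperApprox (fun a b => P a b ∨ Q a b) Aᶜ)) =
        upperApprox (fun a b => P a b ∨ Q a b) Aᶜ) ∧
      (A ⊆ B →
        upperApprox (fun a b => P a b ∨ Q a b) Bᶜ ⊆
          upperApprox (fun a b => P a b ∨ Q a b) Aᶜ) ∧
      (upperApprox (fun a b => P a b ∨ Q a b)
          ((upperApprox (fun a b => P a b ∨ Q a b) Aᶜ)ᶜ) = A) ∧
      (A ∪ upperApprox (fun a b => P a b ∨ Q a b) Aᶜ = Set.univ) ∧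
      (upperApprox (fun a b => P a b ∨ Q a b)
          (lowerApprox (fun a b => P a b ∨ Q a b)
            (A ∩ upperApprox (fun a b => P a b ∨ Q a b) Aᶜ)) = ∅) := by
  intro A B hA hB
  set T : α → α → Prop := fun a b => P a b ∨ Q a b with hT
  have hsym : ∀ a b, T a b → T b a := fun a b h =>
    h.imp (hP.symm) (hQ.symm)
  have hrefl : ∀ a, T a a := fun a => Or.inl (hP.refl a)
  refine ⟨?_, ?_, ?_, ?_, ?_⟩
  · -- u (l (u Aᶜ)) = u Aᶜ
    apply Set.Subset.antisymm (upper_lower_subset' hsym _)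
    exact upper_mono' T (subset_lower_upper' hsym _)
  · intro hAB
    exact upper_mono' T (Set.compl_subset_compl.mpr hAB)
  · rw [upper_compl' T A, compl_compl, hA]
  · apply Set.eq_univ_of_forall
    intro x
    by_cases hx : x ∈ A
    · exact Or.inl hx
    · exact Or.inr ⟨x, hrefl x, hx⟩
  · have hl : lowerApprox T (A ∩ upperApprox T Aᶜ) = ∅ := by
      rw [upper_compl']
      ext x
      simp only [lowerApprox, Set.mem_setOf_eq, Set.mem_empty_iff_false, iff_false]
      intro hx
      have hx' := hx (hrefl x)
      exact hx'.2 fun y hy => (hx hy).1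
    rw [hl]
    ext x
    simp [upperApprox]
end

section
/- Let P and Q be equivalence relations on a set U and write T = P ∪ Q. For any x ∈ U, the neighbourhood T(x) = P(x) ∪ Q(x) is a T-preblock (i.e. T(x) × T(x) ⊆ T) if and only if P(x) ⊆ Q(x) or Q(x) ⊆ P(x). -/
/-- T(x) is a T-preblock iff P(x) ⊆ Q(x) or Q(x) ⊆ P(x),
where T = P ∪ Q. -/
theorem stmt_10 {α : Type*} (P Q : α → α → Prop)
    (hP : Equivalence P) (hQ : Equivalence Q) (x : α) :
    (∀ a ∈ nbhd (fun a b => P a b ∨ Q a b) x,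
      ∀ b ∈ nbhd (fun a b => P a b ∨ Q a b) x, P a b ∨ Q a b) ↔
    (nbhd P x ⊆ nbhd Q x ∨ nbhd Q x ⊆ nbhd P x) := by
  constructor
  · intro h
    by_contra hc
    push_neg at hc
    obtain ⟨hPQ, hQP⟩ := hc
    simp only [Set.not_subset] at hPQ hQP
    obtain ⟨a, hxa, hna⟩ := hPQ
    obtain ⟨b, hxb, hnb⟩ := hQP
    rcases h a (Or.inl hxa) b (Or.inr hxb) with hab | hab
    · exact hnb (hP.trans hxa hab)
    · exact hna (hQ.trans hxb (hQ.symm hab))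
  · rintro (hsub | hsub) a ha b hb
    · have ha' : Q x a := by rcases ha with h | h; exact hsub h; exact h
      have hb' : Q x b := by rcases hb with h | h; exact hsub h; exact h
      exact Or.inr (hQ.trans (hQ.symm ha') hb')
    · have ha' : P x a := by rcases ha with h | h; exact h; exact hsub h
      have hb' : P x b := by rcases hb with h | h; exact h; exact hsub h
      exact Or.inl (hP.trans (hP.symm ha') hb')
end

section
/- Let R and S be equivalence relations on a set U with R ⊆ S. Then for any X ⊆ U, (X^R)^S = X^S and (X^S)^R = X^S. -/
/-- for equivalences R ⊆ S: (X^R)^S = X^S and (X^S)^R = X^S. -/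
theorem stmt_11 {α : Type*} (R S : α → α → Prop)
    (hR : Equivalence R) (hS : Equivalence S)
    (hRS : ∀ a b, R a b → S a b) :
    ∀ X : Set α,
      upperApprox S (upperApprox R X) = upperApprox S X ∧
      upperApprox R (upperApprox S X) = upperApprox S X := by
  intro X
  constructor
  · ext x
    simp only [upperApprox, nbhd, Set.mem_setOf_eq, Set.mem_inter_iff, Set.Nonempty]
    constructor
    · rintro ⟨y, hxy, z, hyz, hz⟩
      exact ⟨z, hS.trans hxy (hRS _ _ hyz), hz⟩
    · rintro ⟨y, hxy, hy⟩
      exact ⟨y, hxy, y, hR.refl y, hy⟩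
  · ext x
    simp only [upperApprox, nbhd, Set.mem_setOf_eq, Set.mem_inter_iff, Set.Nonempty]
    constructor
    · rintro ⟨y, hxy, z, hyz, hz⟩
      exact ⟨z, hS.trans (hRS _ _ hxy) hyz, hz⟩
    · rintro ⟨y, hxy, hy⟩
      exact ⟨x, hR.refl x, y, hxy, hy⟩
end

section
/- Let P and Q be equivalence relations on a set U. Then for any X ⊆ U, (X^{P∩Q})^{P+Q} = X^{P+Q}; consequently, if X^{P∩Q} = Y^{P∩Q} for X, Y ⊆ U, then X^{P+Q} = Y^{P+Q}. -/
lemma upper_inter_aux {α : Type*} (P Q : α → α → Prop)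
    (hP : Equivalence P) (hQ : Equivalence Q) (X : Set α) :
    upperApprox P (upperApprox (fun a b => P a b ∧ Q a b) X) = upperApprox P X := by
  ext x
  constructor
  · rintro ⟨y, hxy, z, ⟨hyz, _⟩, hzX⟩
    exact ⟨z, hP.trans hxy hyz, hzX⟩
  · rintro ⟨z, hxz, hzX⟩
    exact ⟨z, hxz, z, ⟨hP.refl z, hQ.refl z⟩, hzX⟩

/-- (X^{P∩Q})^{P+Q} = X^{P+Q}, and hence X^{P∩Q} = Y^{P∩Q}
implies X^{P+Q} = Y^{P+Q}. -/
theorem stmt_12 {α : Type*} (P Q : α → α → Prop)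
    (hP : Equivalence P) (hQ : Equivalence Q) :
    (∀ X : Set α,
      optUpper P Q (upperApprox (fun a b => P a b ∧ Q a b) X) = optUpper P Q X) ∧
    (∀ X Y : Set α,
      upperApprox (fun a b => P a b ∧ Q a b) X = upperApprox (fun a b => P a b ∧ Q a b) Y →
      optUpper P Q X = optUpper P Q Y) := by
  have key : ∀ X : Set α,
      optUpper P Q (upperApprox (fun a b => P a b ∧ Q a b) X) = optUpper P Q X := by
    intro X
    have h1 := upper_inter_aux P Q hP hQ X
    have h2 : upperApprox Q (upperApprox (fun a b => P a b ∧ Q a b) X) = upperApprox Q X := by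
      have := upper_inter_aux Q P hQ hP X
      have hcomm : (fun a b => P a b ∧ Q a b) = (fun a b => Q a b ∧ P a b) := by
        ext a b; exact and_comm
      rw [hcomm]; exact this
    simp only [optUpper, h1, h2]
  exact ⟨key, fun X Y h => by rw [← key X, ← key Y, h]⟩
end

section
/- Let P and Q be equivalence relations on a set U. If A ⊆ U satisfies A^{P+Q} = A, or satisfies A_{P+Q} = A, then A is (P ∩ Q)-definable, i.e. A^{P∩Q} = A. -/
/-- elements of ℘(U)^{P+Q} and ℘(U)_{P+Q} are (P∩Q)-definable. -/
theorem stmt_13 {α : Type*} (P Q : α → α → Prop)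
    (hP : Equivalence P) (hQ : Equivalence Q) (A : Set α)
    (h : optUpper P Q A = A ∨ optLower P Q A = A) :
    upperApprox (fun a b => P a b ∧ Q a b) A = A := by
  ext x
  constructor
  · rintro ⟨y, ⟨hPxy, hQxy⟩, hyA⟩
    rcases h with h | h
    · rw [← h]
      exact ⟨⟨y, hPxy, hyA⟩, ⟨y, hQxy, hyA⟩⟩
    · rw [← h] at hyA
      rcases hyA with hy | hy
      · exact hy (hP.symm hPxy)
      · exact hy (hQ.symm hQxy)
  · intro hx
    exact ⟨x, ⟨hP.refl x, hQ.refl x⟩, hx⟩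
end

section
/- Let P and Q be equivalence relations on a set U satisfying condition (C): for every x ∈ U, if (P ∩ Q)(x) = {x} then P(x) = {x} or Q(x) = {x}. Then for any family H of subsets of U there exists a set Z ⊆ U such that Z_{P+Q} = (⋂_{X∈H} X_{P+Q})_{P+Q} and Z^{P+Q} = ⋂_{X∈H} X^{P+Q}. In particular, the pair ((⋂_{X∈H} X_{P+Q})_{P+Q}, ⋂_{X∈H} X^{P+Q}) is itself an optimistic rough set, and it is the infimum of {(X_{P+Q}, X^{P+Q}) : X ∈ H} in the componentwise order. -/
/-- Condition (C): if (P ∩ Q)(x) = {x} then P(x) = {x} or Q(x) = {x}. -/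
def CondC {α : Type*} (P Q : α → α → Prop) : Prop :=
  ∀ x : α, nbhd (fun a b => P a b ∧ Q a b) x = {x} →
    nbhd P x = {x} ∨ nbhd Q x = {x}

lemma nbhd_eq_of_rel {α : Type*} {R : α → α → Prop} (hR : Equivalence R)
    {x y : α} (h : R x y) : nbhd R x = nbhd R y := by
  ext z
  exact ⟨fun hz => hR.trans (hR.symm h) hz, fun hz => hR.trans h hz⟩


/-- under condition (C), the pair
((⋂_{X∈H} X_{P+Q})_{P+Q}, ⋂_{X∈H} X^{P+Q}) is an optimistic rough set
and is the infimum of {(X_{P+Q}, X^{P+Q}) : X ∈ H}. -/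
theorem stmt_14 {α : Type*} (P Q : α → α → Prop)
    (hP : Equivalence P) (hQ : Equivalence Q) (hC : CondC P Q)
    (H : Set (Set α)) :
    (∃ Z : Set α,
      optLower P Q Z = optLower P Q (⋂ X ∈ H, optLower P Q X) ∧
      optUpper P Q Z = ⋂ X ∈ H, optUpper P Q X) ∧
    (∀ X ∈ H,
      optLower P Q (⋂ Y ∈ H, optLower P Q Y) ⊆ optLower P Q X ∧
      (⋂ Y ∈ H, optUpper P Q Y) ⊆ optUpper P Q X) ∧
    (∀ W : Set α,
      (∀ X ∈ H, optLower P Q W ⊆ optLower P Q X ∧ optUpper P Q W ⊆ optUpper P Q X) →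
      optLower P Q W ⊆ optLower P Q (⋂ X ∈ H, optLower P Q X) ∧
      optUpper P Q W ⊆ ⋂ X ∈ H, optUpper P Q X) := by
  classical
  set E : α → α → Prop := fun a b => P a b ∧ Q a b with hEdef
  have hE : Equivalence E :=
    ⟨fun a => ⟨hP.refl a, hQ.refl a⟩,
     fun h => ⟨hP.symm h.1, hQ.symm h.2⟩,
     fun h1 h2 => ⟨hP.trans h1.1 h2.1, hQ.trans h1.2 h2.2⟩⟩
  set L : Set α := ⋂ X ∈ H, optLower P Q X with hLdef
  set A : Set α := optLower P Q L with hAdef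
  set B : Set α := ⋂ X ∈ H, optUpper P Q X with hBdef
  have lower_subset : ∀ Y : Set α, optLower P Q Y ⊆ Y := by
    intro Y x hx
    rcases hx with hx | hx
    · exact hx (hP.refl x)
    · exact hx (hQ.refl x)
  have hLB : L ⊆ B := by
    intro x hx
    rw [hBdef]
    apply Set.mem_iInter₂.mpr
    intro X hX
    have hxX : x ∈ X := lower_subset X (Set.mem_iInter₂.mp hx X hX)
    exact ⟨⟨x, hP.refl x, hxX⟩, ⟨x, hQ.refl x, hxX⟩⟩
  have hAL : A ⊆ L := lower_subset L
  have hAB : A ⊆ B := hAL.trans hLB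
  have hAsat : ∀ {x y : α}, E x y → x ∈ A → y ∈ A := by
    intro x y hxy hx
    rcases hx with hx | hx
    · exact Or.inl (by show nbhd P y ⊆ L; rw [← nbhd_eq_of_rel hP hxy.1]; exact hx)
    · exact Or.inr (by show nbhd Q y ⊆ L; rw [← nbhd_eq_of_rel hQ hxy.2]; exact hx)
  have hBsat : ∀ {x y : α}, E x y → x ∈ B → y ∈ B := by
    intro x y hxy hx
    rw [hBdef] at hx ⊢
    apply Set.mem_iInter₂.mpr
    intro X hX
    obtain ⟨h1, h2⟩ := Set.mem_iInter₂.mp hx X hX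
    constructor
    · show (nbhd P y ∩ X).Nonempty
      rwa [← nbhd_eq_of_rel hP hxy.1]
    · show (nbhd Q y ∩ X).Nonempty
      rwa [← nbhd_eq_of_rel hQ hxy.2]
  -- key: (P∩Q)-classes inside B \ A are not singletons
  have key : ∀ b, b ∈ B → b ∉ A → ∃ t, E b t ∧ t ≠ b := by
    intro b hbB hbA
    by_contra hcon
    push_neg at hcon
    have hnE : nbhd E b = {b} := by
      apply Set.eq_singleton_iff_unique_mem.mpr
      exact ⟨hE.refl b, fun t ht => hcon t ht⟩
    have hbX : ∀ R : α → α → Prop, nbhd R b = {b} →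
        (∀ X ∈ H, (nbhd R b ∩ X).Nonempty) → ∀ X ∈ H, nbhd R b ⊆ X := by
      intro R hnb hup X hX
      obtain ⟨z, hz1, hz2⟩ := hup X hX
      rw [hnb] at hz1 ⊢
      rcases hz1 with rfl
      exact fun w hw => by rcases hw with rfl; exact hz2
    rcases hC b hnE with hnb | hnb
    · have hbL : b ∈ L := by
        rw [hLdef]
        apply Set.mem_iInter₂.mpr
        intro X hX
        exact Or.inl (hbX P hnb
          (fun X hX => (Set.mem_iInter₂.mp hbB X hX).1) X hX)
      exact hbA (Or.inl (by
        show nbhd P b ⊆ L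
        rw [hnb]
        exact fun w hw => by rcases hw with rfl; exact hbL))
    · have hbL : b ∈ L := by
        rw [hLdef]
        apply Set.mem_iInter₂.mpr
        intro X hX
        exact Or.inr (hbX Q hnb
          (fun X hX => (Set.mem_iInter₂.mp hbB X hX).2) X hX)
      exact hbA (Or.inr (by
        show nbhd Q b ⊆ L
        rw [hnb]
        exact fun w hw => by rcases hw with rfl; exact hbL))
  -- representative function for E-classes
  letI s : Setoid α := ⟨E, hE⟩
  set r : α → α := fun x => (Quotient.mk s x).out with hrdef
  have hrE : ∀ x, E x (r x) := fun x => hE.symm (Quotient.mk_out x)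
  have hr_eq : ∀ {x y : α}, E x y → r x = r y := by
    intro x y h
    simp only [hrdef]
    congr 1
    exact Quotient.sound h
  set S : Set α := {x | x ∈ B ∧ x ∉ A ∧ r x = x} with hSdef
  set Z : Set α := A ∪ S with hZdef
  have hZB : Z ⊆ B := by
    intro z hz
    rcases hz with hz | hz
    · exact hAB hz
    · exact hz.1
  have hupper : optUpper P Q Z = B := by
    apply Set.Subset.antisymm
    · rintro x ⟨⟨p, hpP, hpZ⟩, ⟨q, hqQ, hqZ⟩⟩
      have hpB := hZB hpZ
      have hqB := hZB hqZ
      rw [hBdef]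
      apply Set.mem_iInter₂.mpr
      intro X hX
      obtain ⟨hp1, _⟩ := Set.mem_iInter₂.mp hpB X hX
      obtain ⟨_, hq2⟩ := Set.mem_iInter₂.mp hqB X hX
      constructor
      · show (nbhd P x ∩ X).Nonempty
        rwa [nbhd_eq_of_rel hP hpP]
      · show (nbhd Q x ∩ X).Nonempty
        rwa [nbhd_eq_of_rel hQ hqQ]
    · intro b hb
      by_cases hbA : b ∈ A
      · exact ⟨⟨b, hP.refl b, Or.inl hbA⟩, ⟨b, hQ.refl b, Or.inl hbA⟩⟩
      · have hrbS : r b ∈ S := by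
          refine ⟨hBsat (hrE b) hb, fun h => hbA (hAsat (hE.symm (hrE b)) h), ?_⟩
          exact (hr_eq (hrE b)).symm
        exact ⟨⟨r b, (hrE b).1, Or.inr hrbS⟩, ⟨r b, (hrE b).2, Or.inr hrbS⟩⟩
  have hlower : optLower P Q Z = A := by
    apply Set.Subset.antisymm
    · intro x hx
      rcases hx with hx | hx
      · have hxZ : x ∈ Z := hx (hP.refl x)
        rcases hxZ with hxA | hxS
        · exact hxA
        · exfalso
          obtain ⟨t, htE, htne⟩ := key x hxS.1 hxS.2.1
          have htZ : t ∈ Z := hx htE.1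
          rcases htZ with htA | htS
          · exact hxS.2.1 (hAsat (hE.symm htE) htA)
          · have hxt : r x = r t := hr_eq htE
            rw [hxS.2.2, htS.2.2] at hxt
            exact htne hxt.symm
      · have hxZ : x ∈ Z := hx (hQ.refl x)
        rcases hxZ with hxA | hxS
        · exact hxA
        · exfalso
          obtain ⟨t, htE, htne⟩ := key x hxS.1 hxS.2.1
          have htZ : t ∈ Z := hx htE.2
          rcases htZ with htA | htS
          · exact hxS.2.1 (hAsat (hE.symm htE) htA)
          · have hxt : r x = r t := hr_eq htE
            rw [hxS.2.2, htS.2.2] at hxt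
            exact htne hxt.symm
    · intro a ha
      rcases ha with ha | ha
      · refine Or.inl fun y hy => Or.inl (Or.inl ?_)
        show nbhd P y ⊆ L
        rw [← nbhd_eq_of_rel hP hy]
        exact ha
      · refine Or.inr fun y hy => Or.inl (Or.inr ?_)
        show nbhd Q y ⊆ L
        rw [← nbhd_eq_of_rel hQ hy]
        exact ha
  refine ⟨⟨Z, hlower, hupper⟩, ?_, ?_⟩
  · intro X hX
    constructor
    · intro x hx
      exact Set.mem_iInter₂.mp (hAL hx) X hX
    · intro x hx
      exact Set.mem_iInter₂.mp hx X hX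
  · intro W hW
    constructor
    · have h1 : optLower P Q W ⊆ L := by
        intro x hx
        rw [hLdef]
        exact Set.mem_iInter₂.mpr fun X hX => (hW X hX).1 hx
      intro x hx
      rcases hx with hx | hx
      · refine Or.inl fun y hy => h1 (Or.inl ?_)
        show nbhd P y ⊆ W
        rw [← nbhd_eq_of_rel hP hy]
        exact hx
      · refine Or.inr fun y hy => h1 (Or.inr ?_)
        show nbhd Q y ⊆ W
        rw [← nbhd_eq_of_rel hQ hy]
        exact hx
    · intro x hx
      exact Set.mem_iInter₂.mpr fun X hX => (hW X hX).2 hx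
end

section
/- Let P and Q be equivalence relations on a set U satisfying condition (C): for every x ∈ U, if (P ∩ Q)(x) = {x} then P(x) = {x} or Q(x) = {x}. Then for any family H of subsets of U there exists a set W ⊆ U such that W_{P+Q} = ⋃_{X∈H} X_{P+Q} and W^{P+Q} = (⋃_{X∈H} X^{P+Q})^{P+Q}. In particular, this pair is the supremum of {(X_{P+Q}, X^{P+Q}) : X ∈ H} in the componentwise order, so RS(P+Q) is a complete lattice. -/
section Aux
variable {α : Type*} {R P Q : α → α → Prop}

lemma mem_nbhd_self (hR : Equivalence R) (x : α) : x ∈ nbhd R x := hR.refl x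

lemma nbhd_congr (hR : Equivalence R) {x y : α} (h : R x y) : nbhd R x = nbhd R y := by
  ext z; exact ⟨fun hz => hR.trans (hR.symm h) hz, fun hz => hR.trans h hz⟩

lemma upperApprox_mono {X Y : Set α} (h : X ⊆ Y) :
    upperApprox R X ⊆ upperApprox R Y := fun x ⟨y, hy1, hy2⟩ => ⟨y, hy1, h hy2⟩

lemma optUpper_mono {X Y : Set α} (h : X ⊆ Y) :
    optUpper P Q X ⊆ optUpper P Q Y :=
  Set.inter_subset_inter (upperApprox_mono h) (upperApprox_mono h)

lemma subset_upperApprox (hR : Equivalence R) (X : Set α) : X ⊆ upperApprox R X :=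
  fun x hx => ⟨x, mem_nbhd_self hR x, hx⟩

lemma subset_optUpper (hP : Equivalence P) (hQ : Equivalence Q) (X : Set α) :
    X ⊆ optUpper P Q X :=
  fun x hx => ⟨subset_upperApprox hP X hx, subset_upperApprox hQ X hx⟩

lemma upperApprox_saturated (hR : Equivalence R) {X : Set α} {x y : α}
    (hxy : R x y) (hy : y ∈ upperApprox R X) : x ∈ upperApprox R X := by
  obtain ⟨z, hz1, hz2⟩ := hy
  exact ⟨z, hR.trans hxy hz1, hz2⟩

lemma optUpper_optUpper (hP : Equivalence P) (hQ : Equivalence Q) (X : Set α) :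
    optUpper P Q (optUpper P Q X) ⊆ optUpper P Q X := by
  rintro x ⟨⟨y, hyP, hyU⟩, ⟨z, hzQ, hzU⟩⟩
  exact ⟨upperApprox_saturated hP hyP hyU.1, upperApprox_saturated hQ hzQ hzU.2⟩

lemma optLower_subset (hP : Equivalence P) (hQ : Equivalence Q) (X : Set α) :
    optLower P Q X ⊆ X := by
  rintro x (hx | hx)
  · exact hx (mem_nbhd_self hP x)
  · exact hx (mem_nbhd_self hQ x)

end Aux

/-- under condition (C), the pair
(⋃_{X∈H} X_{P+Q}, (⋃_{X∈H} X^{P+Q})^{P+Q}) is an optimistic rough set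
and is the supremum of {(X_{P+Q}, X^{P+Q}) : X ∈ H}. -/
theorem stmt_15 {α : Type*} (P Q : α → α → Prop)
    (hP : Equivalence P) (hQ : Equivalence Q) (hC : CondC P Q)
    (H : Set (Set α)) :
    (∃ W : Set α,
      optLower P Q W = ⋃ X ∈ H, optLower P Q X ∧
      optUpper P Q W = optUpper P Q (⋃ X ∈ H, optUpper P Q X)) ∧
    (∀ X ∈ H,
      optLower P Q X ⊆ (⋃ Y ∈ H, optLower P Q Y) ∧
      optUpper P Q X ⊆ optUpper P Q (⋃ Y ∈ H, optUpper P Q Y)) ∧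
    (∀ W : Set α,
      (∀ X ∈ H, optLower P Q X ⊆ optLower P Q W ∧ optUpper P Q X ⊆ optUpper P Q W) →
      (⋃ X ∈ H, optLower P Q X) ⊆ optLower P Q W ∧
      optUpper P Q (⋃ X ∈ H, optUpper P Q X) ⊆ optUpper P Q W) := by
  classical
  have hR : Equivalence (fun a b => P a b ∧ Q a b) :=
    ⟨fun x => ⟨hP.refl x, hQ.refl x⟩, fun h => ⟨hP.symm h.1, hQ.symm h.2⟩,
     fun h h' => ⟨hP.trans h.1 h'.1, hQ.trans h.2 h'.2⟩⟩
  set Rr : α → α → Prop := fun a b => P a b ∧ Q a b with hRdef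
  set A : Set α := ⋃ X ∈ H, optLower P Q X with hAdef
  set S : Set α := ⋃ X ∈ H, optUpper P Q X with hSdef
  set B : Set α := optUpper P Q S with hBdef
  -- A is optimistically saturated
  have hAsat : ∀ x ∈ A, nbhd P x ⊆ A ∨ nbhd Q x ⊆ A := by
    intro x hx
    simp only [hAdef, Set.mem_iUnion] at hx
    obtain ⟨X, hX, hxX⟩ := hx
    rcases hxX with h | h
    · left; intro y hy
      have he : nbhd P y = nbhd P x := nbhd_congr hP (hP.symm hy)
      simp only [hAdef, Set.mem_iUnion]
      exact ⟨X, hX, Or.inl (by rw [lowerApprox, Set.mem_setOf_eq, he]; exact h)⟩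
    · right; intro y hy
      have he : nbhd Q y = nbhd Q x := nbhd_congr hQ (hQ.symm hy)
      simp only [hAdef, Set.mem_iUnion]
      exact ⟨X, hX, Or.inr (by rw [lowerApprox, Set.mem_setOf_eq, he]; exact h)⟩
  have hAB : A ⊆ B := by
    intro x hx
    have hxS : x ∈ S := by
      simp only [hAdef, Set.mem_iUnion] at hx
      obtain ⟨X, hX, hxX⟩ := hx
      simp only [hSdef, Set.mem_iUnion]
      exact ⟨X, hX, subset_optUpper hP hQ X (optLower_subset hP hQ X hxX)⟩
    exact subset_optUpper hP hQ S hxS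
  have hRB : ∀ x ∈ B, ∀ y, Rr x y → y ∈ B := by
    intro x hx y hxy
    exact ⟨upperApprox_saturated hP (hP.symm hxy.1) hx.1,
           upperApprox_saturated hQ (hQ.symm hxy.2) hx.2⟩
  -- key consequence of (C): points of B \ A have a distinct R-neighbour
  have hkey : ∀ x ∈ B, x ∉ A → ∃ y, Rr x y ∧ y ≠ x := by
    intro x hxB hxA
    by_contra hcon
    push_neg at hcon
    have hsingle : nbhd Rr x = {x} := by
      ext y
      constructor
      · intro hy; exact hcon y hy
      · rintro rfl; exact hR.refl _
    apply hxA
    rcases hC x hsingle with hPx | hQx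
    · obtain ⟨y, hy1, hy2⟩ := hxB.1
      rw [hPx] at hy1
      rcases hy1 with rfl
      simp only [hSdef, Set.mem_iUnion] at hy2
      obtain ⟨X, hX, hxX⟩ := hy2
      obtain ⟨z, hz1, hz2⟩ := hxX.1
      rw [hPx] at hz1
      rcases hz1 with rfl
      simp only [hAdef, Set.mem_iUnion]
      refine ⟨X, hX, Or.inl ?_⟩
      rw [lowerApprox, Set.mem_setOf_eq, hPx]
      exact Set.singleton_subset_iff.mpr hz2
    · obtain ⟨y, hy1, hy2⟩ := hxB.2
      rw [hQx] at hy1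
      rcases hy1 with rfl
      simp only [hSdef, Set.mem_iUnion] at hy2
      obtain ⟨X, hX, hxX⟩ := hy2
      obtain ⟨z, hz1, hz2⟩ := hxX.2
      rw [hQx] at hz1
      rcases hz1 with rfl
      simp only [hAdef, Set.mem_iUnion]
      refine ⟨X, hX, Or.inr ?_⟩
      rw [lowerApprox, Set.mem_setOf_eq, hQx]
      exact Set.singleton_subset_iff.mpr hz2
  -- canonical representative of each R-class
  let s : Setoid α := ⟨Rr, hR⟩
  let rep : α → α := fun x => (Quotient.mk s x).out
  have hrep_rel : ∀ x, Rr x (rep x) := fun x => hR.symm (Quotient.mk_out (s := s) x)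
  have hrep_eq : ∀ x y, Rr x y → rep x = rep y := by
    intro x y h
    show (Quotient.mk s x).out = (Quotient.mk s y).out
    rw [Quotient.sound (s := s) h]
  set D : Set α := {x | x ∈ B ∧ (∀ a, Rr x a → a ∉ A) ∧ rep x = x} with hDdef
  set W : Set α := A ∪ D with hWdef
  have hWB : W ⊆ B := Set.union_subset hAB (fun x hx => hx.1)
  refine ⟨⟨W, ?_, ?_⟩, ?_, ?_⟩
  · -- optLower W = A
    apply Set.Subset.antisymm
    · rintro x hx
      by_contra hxA
      have hxW : x ∈ W → x ∈ D := fun h => h.resolve_left hxA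
      rcases hx with h | h
      · have hxD : x ∈ D := hxW (h (mem_nbhd_self hP x))
        obtain ⟨y, hxy, hyne⟩ := hkey x hxD.1 (fun ha => hxD.2.1 x (hR.refl x) ha)
        have hyW : y ∈ W := h hxy.1
        have hyD : y ∈ D := hyW.resolve_left (hxD.2.1 y hxy)
        exact hyne (by rw [← hyD.2.2, ← hrep_eq x y hxy, hxD.2.2])
      · have hxD : x ∈ D := hxW (h (mem_nbhd_self hQ x))
        obtain ⟨y, hxy, hyne⟩ := hkey x hxD.1 (fun ha => hxD.2.1 x (hR.refl x) ha)
        have hyW : y ∈ W := h hxy.2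
        have hyD : y ∈ D := hyW.resolve_left (hxD.2.1 y hxy)
        exact hyne (by rw [← hyD.2.2, ← hrep_eq x y hxy, hxD.2.2])
    · intro x hx
      rcases hAsat x hx with h | h
      · exact Or.inl (fun y hy => Or.inl (h hy))
      · exact Or.inr (fun y hy => Or.inl (h hy))
  · -- optUpper W = B
    apply Set.Subset.antisymm
    · exact (optUpper_mono hWB).trans (optUpper_optUpper hP hQ S)
    · intro x hxB
      by_cases hmeet : ∃ a, Rr x a ∧ a ∈ A
      · obtain ⟨a, hxa, haA⟩ := hmeet
        exact ⟨⟨a, hxa.1, Or.inl haA⟩, ⟨a, hxa.2, Or.inl haA⟩⟩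
      · push_neg at hmeet
        have hxc : Rr x (rep x) := hrep_rel x
        have hcD : rep x ∈ D := by
          refine ⟨hRB x hxB (rep x) hxc, ?_, ?_⟩
          · intro a hca
            exact hmeet a (hR.trans hxc hca)
          · exact hrep_eq (rep x) x (hR.symm hxc)
        exact ⟨⟨rep x, hxc.1, Or.inr hcD⟩, ⟨rep x, hxc.2, Or.inr hcD⟩⟩
  · -- upper bound
    intro X hX
    refine ⟨Set.subset_iUnion₂ (s := fun Y _ => optLower P Q Y) X hX, ?_⟩
    intro x hx
    have hxS : x ∈ S := by
      simp only [hSdef, Set.mem_iUnion]; exact ⟨X, hX, hx⟩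
    exact subset_optUpper hP hQ S hxS
  · -- least upper bound
    intro W' hW'
    constructor
    · exact Set.iUnion₂_subset (fun X hX => (hW' X hX).1)
    · have hSW : S ⊆ optUpper P Q W' :=
        Set.iUnion₂_subset (fun X hX => (hW' X hX).2)
      exact (optUpper_mono hSW).trans (optUpper_optUpper hP hQ W')
end

section
/- Let P and Q be equivalence relations on a set U. For every X ⊆ U, the pair (X_{P+Q}, X^{P+Q}) belongs to IRS(P+Q); that is, (X_{P+Q})_{P+Q} = X_{P+Q}, (X^{P+Q})^{P+Q} = X^{P+Q}, X_{P+Q} ⊆ X^{P+Q}, and no element x with P(x) = {x} or Q(x) = {x} lies in X^{P+Q} \ X_{P+Q}. -/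
/-- Membership in IRS(P+Q): A is optimistic-lower-closed, B is
optimistic-upper-closed, A ⊆ B, and no element whose P-class or Q-class is a
singleton lies in B \ A. -/
def IRS {α : Type*} (P Q : α → α → Prop) (A B : Set α) : Prop :=
  optLower P Q A = A ∧ optUpper P Q B = B ∧ A ⊆ B ∧
  ∀ x ∈ B \ A, ¬(nbhd P x = {x} ∨ nbhd Q x = {x})

/-- every optimistic rough set pair (X_{P+Q}, X^{P+Q})
belongs to IRS(P+Q). -/
theorem stmt_16 {α : Type*} (P Q : α → α → Prop)
    (hP : Equivalence P) (hQ : Equivalence Q) (X : Set α) :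
    IRS P Q (optLower P Q X) (optUpper P Q X) := by
  have lowSub : ∀ (R : α → α → Prop), Equivalence R → ∀ Y : Set α,
      lowerApprox R Y ⊆ Y := fun R hR Y x hx => hx (hR.refl x)
  have upSup : ∀ (R : α → α → Prop), Equivalence R → ∀ Y : Set α,
      Y ⊆ upperApprox R Y := fun R hR Y x hx => ⟨x, hR.refl x, hx⟩
  have lowMono : ∀ (R : α → α → Prop) (Y Z : Set α), Y ⊆ Z →
      lowerApprox R Y ⊆ lowerApprox R Z := fun R Y Z h x hx => hx.trans h
  have lowIdem : ∀ (R : α → α → Prop), Equivalence R → ∀ Y : Set α,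
      lowerApprox R Y ⊆ lowerApprox R (lowerApprox R Y) := by
    intro R hR Y x hx y hxy z hyz
    exact hx (hR.trans hxy hyz)
  have upIdem : ∀ (R : α → α → Prop), Equivalence R → ∀ Y : Set α,
      upperApprox R (upperApprox R Y) ⊆ upperApprox R Y := by
    rintro R hR Y x ⟨y, hxy, z, hyz, hz⟩
    exact ⟨z, hR.trans hxy hyz, hz⟩
  refine ⟨?_, ?_, ?_, ?_⟩
  · apply Set.Subset.antisymm
    · rintro x (hx | hx)
      · exact lowSub P hP _ hx
      · exact lowSub Q hQ _ hx
    · rintro x (hx | hx)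
      · exact Or.inl (lowMono P _ _ Set.subset_union_left (lowIdem P hP X hx))
      · exact Or.inr (lowMono Q _ _ Set.subset_union_right (lowIdem Q hQ X hx))
  · apply Set.Subset.antisymm
    · rintro x ⟨hxP, hxQ⟩
      constructor
      · apply upIdem P hP X
        obtain ⟨y, hxy, hy⟩ := hxP
        exact ⟨y, hxy, hy.1⟩
      · apply upIdem Q hQ X
        obtain ⟨y, hxy, hy⟩ := hxQ
        exact ⟨y, hxy, hy.2⟩
    · intro x hx
      exact ⟨upSup P hP _ hx, upSup Q hQ _ hx⟩
  · rintro x (hx | hx)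
    · exact ⟨⟨x, hP.refl x, hx (hP.refl x)⟩, ⟨x, hQ.refl x, hx (hP.refl x)⟩⟩
    · exact ⟨⟨x, hP.refl x, hx (hQ.refl x)⟩, ⟨x, hQ.refl x, hx (hQ.refl x)⟩⟩
  · rintro x ⟨⟨⟨y, hxy, hy⟩, ⟨z, hxz, hz⟩⟩, hnA⟩ (hsing | hsing)
    · have hyx : y = x := by have := hsing ▸ hxy; exact this
      subst hyx
      exact hnA (Or.inl (fun w hw => by
        have hwy : w ∈ ({y} : Set α) := hsing ▸ hw
        rwa [hwy]))
    · have hzx : z = x := by have := hsing ▸ hxz; exact this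
      subst hzx
      exact hnA (Or.inr (fun w hw => by
        have hwz : w ∈ ({z} : Set α) := hsing ▸ hw
        rwa [hwz]))
end

section
/- Let P and Q be equivalence relations on a set U. If (A, B) ∈ IRS(P+Q), then (B^c, A^c) ∈ IRS(P+Q); that is, the polarity ∼(A,B) = (B^c, A^c) maps IRS(P+Q) into itself: (B^c)_{P+Q} = B^c, (A^c)^{P+Q} = A^c, B^c ⊆ A^c, and (A^c \ B^c) ∩ (Σ_P ∪ Σ_Q) = ∅. -/
/-- the polarity ∼(A,B) = (Bᶜ, Aᶜ) maps IRS(P+Q) into itself. -/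
theorem stmt_18 {α : Type*} (P Q : α → α → Prop)
    (hP : Equivalence P) (hQ : Equivalence Q) (A B : Set α)
    (h : IRS P Q A B) :
    IRS P Q Bᶜ Aᶜ := by
  obtain ⟨hA, hB, hAB, hsing⟩ := h
  have dual : ∀ (R : α → α → Prop) (X : Set α),
      lowerApprox R Xᶜ = (upperApprox R X)ᶜ := by
    intro R X
    ext x
    simp only [lowerApprox, upperApprox, Set.mem_setOf_eq, Set.mem_compl_iff,
      Set.not_nonempty_iff_eq_empty, ← Set.disjoint_iff_inter_eq_empty,
      Set.subset_compl_iff_disjoint_right]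
  refine ⟨?_, ?_, fun x hx hxA => hx (hAB hxA), ?_⟩
  · show lowerApprox P Bᶜ ∪ lowerApprox Q Bᶜ = Bᶜ
    rw [dual, dual, ← Set.compl_inter]
    exact congrArg compl hB
  · show upperApprox P Aᶜ ∩ upperApprox Q Aᶜ = Aᶜ
    have h1 : upperApprox P Aᶜ = (lowerApprox P A)ᶜ := by
      rw [← compl_compl A, dual, compl_compl, compl_compl]
    have h2 : upperApprox Q Aᶜ = (lowerApprox Q A)ᶜ := by
      rw [← compl_compl A, dual, compl_compl, compl_compl]
    rw [h1, h2, ← Set.compl_union]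
    exact congrArg compl hA
  · intro x hx
    exact hsing x ⟨by simpa using hx.2, by simpa using hx.1⟩
end
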